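/- arXiv:2009.08834 — 4 statements merged into one kernel-verified Lean document; each statement's English description precedes it below -/
import Mathlib

section
/- Quantitative reversed triangle inequality: there is a constant A = 1/10 such that for all u, v in the positive causal cone of Minkowski space ℝ^{n+1}, one has |u+v|² ≥ |u+v|·(|u| + |v|) + A·D², where D is the Euclidean distance from u (equivalently from v) to the Euclidean line spanned by u+v. -/
/-- The Minkowski product on `ℝ^(n+1)`: `⟨u,v⟩ = u_t v_t − u_x · v_x`. -/
noncomputable def mink {n : ℕ} (u v : EuclideanSpace ℝ (Fin (n + 1))) : ℝ :=
  u 0 * v 0 - ∑ i : Fin n, u i.succ * v i.succ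

/-- The Lorentzian norm of a causal vector. -/
noncomputable def mnorm {n : ℕ} (w : EuclideanSpace ℝ (Fin (n + 1))) : ℝ :=
  Real.sqrt (mink w w)

/-!
Write `u = (s, x)` and `v = (t, y)` with `‖x‖ ≤ s`, `‖y‖ ≤ t`. Since
`|u+v|² = |u|² + |v|² + 2⟨u,v⟩`, AM–GM shows that `|u+v|² - |u+v|(|u|+|v|)` is at least the
defect `⟨u,v⟩ - |u||v|` of the reversed Cauchy–Schwarz inequality. On the other side,
`‖u+v‖² D²` is at most the Euclidean Gram determinant `‖u‖²‖v‖² - (u·v)²`, which equals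
`(s‖y‖ - t‖x‖)² + (‖x‖‖y‖ - x·y)(2st + ‖x‖‖y‖ + x·y)`. The first term is `(N - |u||v|)(N + |u||v|)`
for the `1+1`-dimensional product `N = st - ‖x‖‖y‖`, and `N + |u||v|` as well as
`2st + ‖x‖‖y‖ + x·y` are at most `‖u+v‖²`. Hence `D² ≤ ⟨u,v⟩ - |u||v|`, i.e. the inequality even
holds with `A = 1`.
-/

open RealInnerProductSpace

section InnerProductSpace

variable {F : Type*} [NormedAddCommGroup F] [InnerProductSpace ℝ F]

theorem sq_norm_mul_sq_infDist_span_singleton_le (u w : F) :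
    ‖w‖ ^ 2 * Metric.infDist u (ℝ ∙ w : Set F) ^ 2 ≤ ‖u‖ ^ 2 * ‖w‖ ^ 2 - ⟪u, w⟫ ^ 2 := by
  rcases eq_or_ne w 0 with rfl | hw
  · simp
  set c := ⟪u, w⟫ / ‖w‖ ^ 2 with hc
  have hD : Metric.infDist u (ℝ ∙ w : Set F) ≤ ‖u - c • w‖ := by
    rw [← dist_eq_norm]
    exact Metric.infDist_le_dist_of_mem (Submodule.smul_mem _ _ (Submodule.mem_span_singleton_self w))
  have hw' : ‖w‖ ≠ 0 := norm_ne_zero_iff.mpr hw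
  calc ‖w‖ ^ 2 * Metric.infDist u (ℝ ∙ w : Set F) ^ 2 ≤ ‖w‖ ^ 2 * ‖u - c • w‖ ^ 2 := by
        gcongr
        exact Metric.infDist_nonneg
    _ = ‖u‖ ^ 2 * ‖w‖ ^ 2 - ⟪u, w⟫ ^ 2 := by
        rw [norm_sub_sq_real, real_inner_smul_right, norm_smul, Real.norm_eq_abs, mul_pow, sq_abs, hc]
        field_simp
        ring

theorem sq_norm_add_mul_sq_infDist_le (u v : F) :
    ‖u + v‖ ^ 2 * Metric.infDist u (ℝ ∙ (u + v) : Set F) ^ 2 ≤ ‖u‖ ^ 2 * ‖v‖ ^ 2 - ⟪u, v⟫ ^ 2 := by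
  convert sq_norm_mul_sq_infDist_span_singleton_le u (u + v) using 1
  rw [inner_add_right, real_inner_self_eq_norm_sq, norm_add_sq_real]
  ring

end InnerProductSpace

theorem sqrt_mul_sqrt_le_mul_sub_mul {s t p q : ℝ} (hp : |p| ≤ s) (hq : |q| ≤ t) :
    √(s ^ 2 - p ^ 2) * √(t ^ 2 - q ^ 2) ≤ s * t - p * q := by
  have hpq : p * q ≤ s * t := by
    calc p * q ≤ |p| * |q| := by rw [← abs_mul]; exact le_abs_self _
      _ ≤ s * t := mul_le_mul hp hq (abs_nonneg q) ((abs_nonneg p).trans hp)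
  rw [← Real.sqrt_mul' _ (by nlinarith [sq_abs q, abs_nonneg q]), Real.sqrt_le_iff]
  exact ⟨by linarith, by nlinarith [sq_nonneg (s * q - t * p)]⟩

theorem gram_le_mul_sub_sqrt_mul_sqrt {s t p q S : ℝ} (hp : 0 ≤ p) (hq : 0 ≤ q)
    (hps : p ≤ s) (hqt : q ≤ t) (hS : |S| ≤ p * q) :
    (s ^ 2 + p ^ 2) * (t ^ 2 + q ^ 2) - (s * t + S) ^ 2
      ≤ ((s + t) ^ 2 + p ^ 2 + q ^ 2 + 2 * S) * (s * t - S - √(s ^ 2 - p ^ 2) * √(t ^ 2 - q ^ 2)) := by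
  obtain ⟨hS₁, hS₂⟩ := abs_le.mp hS
  set E := (s + t) ^ 2 + p ^ 2 + q ^ 2 + 2 * S
  set r := √(s ^ 2 - p ^ 2) * √(t ^ 2 - q ^ 2)
  have hr2 : r ^ 2 = (s ^ 2 - p ^ 2) * (t ^ 2 - q ^ 2) := by
    rw [mul_pow, Real.sq_sqrt (by nlinarith), Real.sq_sqrt (by nlinarith)]
  have hrN : r ≤ s * t - p * q :=
    sqrt_mul_sqrt_le_mul_sub_mul (by rwa [abs_of_nonneg hp]) (by rwa [abs_of_nonneg hq])
  have hNE : s * t - p * q + r ≤ E := by nlinarith [sq_nonneg (s - t), sq_nonneg (p - q)]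
  have hX : (s * q - t * p) ^ 2 ≤ (s * t - p * q - r) * E :=
    calc (s * q - t * p) ^ 2 = (s * t - p * q - r) * (s * t - p * q + r) := by
          linear_combination hr2
      _ ≤ (s * t - p * q - r) * E := mul_le_mul_of_nonneg_left hNE (by linarith)
  have hm : (p * q - S) * (2 * s * t + p * q + S) ≤ (p * q - S) * E :=
    mul_le_mul_of_nonneg_left (by nlinarith [sq_nonneg (p - q)]) (by linarith)
  calc (s ^ 2 + p ^ 2) * (t ^ 2 + q ^ 2) - (s * t + S) ^ 2
      = (s * q - t * p) ^ 2 + (p * q - S) * (2 * s * t + p * q + S) := by ring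
    _ ≤ (s * t - p * q - r) * E + (p * q - S) * E := add_le_add hX hm
    _ = E * (s * t - S - r) := by ring

namespace Minkowski

variable {n : ℕ}

def spatial (u : EuclideanSpace ℝ (Fin (n + 1))) : EuclideanSpace ℝ (Fin n) :=
  WithLp.toLp 2 fun i => u i.succ

theorem spatial_add (u v : EuclideanSpace ℝ (Fin (n + 1))) :
    spatial (u + v) = spatial u + spatial v := rfl

theorem mink_eq (u v : EuclideanSpace ℝ (Fin (n + 1))) :
    mink u v = u 0 * v 0 - ⟪spatial u, spatial v⟫ := by
  simp [mink, spatial, PiLp.inner_apply, mul_comm]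

theorem inner_eq (u v : EuclideanSpace ℝ (Fin (n + 1))) :
    ⟪u, v⟫ = u 0 * v 0 + ⟪spatial u, spatial v⟫ := by
  simp [spatial, PiLp.inner_apply, Fin.sum_univ_succ, mul_comm]

theorem norm_sq_eq (u : EuclideanSpace ℝ (Fin (n + 1))) :
    ‖u‖ ^ 2 = u 0 ^ 2 + ‖spatial u‖ ^ 2 := by
  rw [← real_inner_self_eq_norm_sq, inner_eq, real_inner_self_eq_norm_sq]
  ring

theorem mink_self (u : EuclideanSpace ℝ (Fin (n + 1))) :
    mink u u = u 0 ^ 2 - ‖spatial u‖ ^ 2 := by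
  rw [mink_eq, real_inner_self_eq_norm_sq]
  ring

theorem mink_add_self (u v : EuclideanSpace ℝ (Fin (n + 1))) :
    mink (u + v) (u + v) = mink u u + 2 * mink u v + mink v v := by
  rw [mink_eq, mink_eq, mink_eq, mink_eq, spatial_add, PiLp.add_apply,
    real_inner_add_add_self]
  ring

theorem mnorm_eq (u : EuclideanSpace ℝ (Fin (n + 1))) :
    mnorm u = √(u 0 ^ 2 - ‖spatial u‖ ^ 2) := by
  rw [mnorm, mink_self]

theorem norm_spatial_le {u : EuclideanSpace ℝ (Fin (n + 1))} (hu : 0 ≤ mink u u) (hut : 0 ≤ u 0) :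
    ‖spatial u‖ ≤ u 0 := by
  rw [mink_self, sub_nonneg] at hu
  exact pow_le_pow_iff_left₀ (norm_nonneg _) hut two_ne_zero |>.mp hu

theorem mnorm_mul_mnorm_le_mink {u v : EuclideanSpace ℝ (Fin (n + 1))}
    (hu : 0 ≤ mink u u) (hut : 0 ≤ u 0) (hv : 0 ≤ mink v v) (hvt : 0 ≤ v 0) :
    mnorm u * mnorm v ≤ mink u v := by
  rw [mnorm_eq, mnorm_eq, mink_eq]
  calc _ ≤ u 0 * v 0 - ‖spatial u‖ * ‖spatial v‖ :=
        sqrt_mul_sqrt_le_mul_sub_mul ((abs_norm _).trans_le (norm_spatial_le hu hut))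
          ((abs_norm _).trans_le (norm_spatial_le hv hvt))
    _ ≤ _ := by linarith [real_inner_le_norm (spatial u) (spatial v)]

theorem mnorm_add_mul_add_le {u v : EuclideanSpace ℝ (Fin (n + 1))}
    (hu : 0 ≤ mink u u) (hut : 0 ≤ u 0) (hv : 0 ≤ mink v v) (hvt : 0 ≤ v 0) :
    mnorm (u + v) * (mnorm u + mnorm v) + (mink u v - mnorm u * mnorm v) ≤ mnorm (u + v) ^ 2 := by
  have hCS := mnorm_mul_mnorm_le_mink hu hut hv hvt
  have hsq : mnorm (u + v) ^ 2 = mnorm u ^ 2 + 2 * mink u v + mnorm v ^ 2 := by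
    have huv : 0 ≤ mink u v := (mul_nonneg (Real.sqrt_nonneg _) (Real.sqrt_nonneg _)).trans hCS
    have hw : 0 ≤ mink (u + v) (u + v) := by rw [mink_add_self]; positivity
    rw [mnorm, mnorm, mnorm, Real.sq_sqrt hu, Real.sq_sqrt hv, Real.sq_sqrt hw, mink_add_self]
  nlinarith [sq_nonneg (mnorm (u + v) - mnorm u - mnorm v)]

theorem sq_infDist_le_mink_sub_mnorm_mul {u v : EuclideanSpace ℝ (Fin (n + 1))}
    (hu : 0 ≤ mink u u) (hut : 0 < u 0) (hv : 0 ≤ mink v v) (hvt : 0 < v 0) :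
    Metric.infDist u (ℝ ∙ (u + v) : Set (EuclideanSpace ℝ (Fin (n + 1)))) ^ 2
      ≤ mink u v - mnorm u * mnorm v := by
  have hpos : 0 < ‖u + v‖ ^ 2 := by
    rw [norm_sq_eq, PiLp.add_apply]
    positivity
  have hgram := gram_le_mul_sub_sqrt_mul_sqrt (norm_nonneg (spatial u)) (norm_nonneg (spatial v))
    (norm_spatial_le hu hut.le) (norm_spatial_le hv hvt.le) (abs_real_inner_le_norm _ _)
  rw [← mink_eq, ← mnorm_eq, ← mnorm_eq, ← norm_sq_eq, ← norm_sq_eq, ← inner_eq] at hgram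
  have hsum : ‖u + v‖ ^ 2 = (u 0 + v 0) ^ 2 + ‖spatial u‖ ^ 2 + ‖spatial v‖ ^ 2
      + 2 * ⟪spatial u, spatial v⟫ := by
    rw [norm_sq_eq, spatial_add, norm_add_sq_real, PiLp.add_apply]
    ring
  rw [← hsum] at hgram
  exact le_of_mul_le_mul_left ((sq_norm_add_mul_sq_infDist_le u v).trans hgram) hpos

end Minkowski

/-- Quantitative reversed triangle inequality: with `A = 1/10`, for `u, v` in the
positive causal cone, `|u+v|² ≥ |u+v|·(|u|+|v|) + A·D²`, where `D` is the Euclidean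
distance from `u` to the line spanned by `u+v`. -/
theorem quantitative_reversed_triangle {n : ℕ} (u v : EuclideanSpace ℝ (Fin (n + 1)))
    (hu : 0 ≤ mink u u) (hut : 0 < u 0)
    (hv : 0 ≤ mink v v) (hvt : 0 < v 0) :
    mnorm (u + v) * (mnorm u + mnorm v)
        + (1 / 10) * (Metric.infDist u (Submodule.span ℝ {u + v} : Set (EuclideanSpace ℝ (Fin (n + 1))))) ^ 2
      ≤ mnorm (u + v) ^ 2 := by
  have hdefect := Minkowski.mnorm_add_mul_add_le hu hut.le hv hvt.le
  have hdist := Minkowski.sq_infDist_le_mink_sub_mnorm_mul hu hut hv hvt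
  have hD := sq_nonneg
    (Metric.infDist u (Submodule.span ℝ {u + v} : Set (EuclideanSpace ℝ (Fin (n + 1)))))
  linarith
end

section
/- Let s : [a,b] → [0,∞) be Lipschitz continuous with |s'(t)| ≤ C·s(t)² for almost every t, where C > 0. Then either s ≡ 0 on [a,b], or s(t) > 0 for all t in [a,b] and the function t ↦ 1/s(t) is C-Lipschitz on [a,b]. -/
open MeasureTheory Set Filter Topology
open scoped NNReal

/-!
For `ε > 0` the truncated reciprocal `1 / max s ε` is Lipschitz, and wherever it is differentiable
its derivative is at most `C` in absolute value: truncation only shrinks the difference quotients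
of `s`, and `|s'| / max s ε ^ 2 ≤ C s ^ 2 / max s ε ^ 2 ≤ C`. By the fundamental theorem of calculus
for absolutely continuous functions, `1 / max s ε` is then `C`-Lipschitz for every `ε`. If
`s t₀ > 0`, this bounds `1 / max (s t) ε` by `R = 1 / s t₀ + C (b - a)` on `[a, b]`, and taking
`ε < 1 / R` forces `s ≥ 1 / R` there; then `1 / s = 1 / max s ε` on `[a, b]`.
-/

theorem norm_deriv_le_of_norm_sub_le {E F : Type*} [NormedAddCommGroup E] [NormedSpace ℝ E]
    [NormedAddCommGroup F] [NormedSpace ℝ F] {f : ℝ → E} {g : ℝ → F} {d : E} {t : ℝ}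
    (hf : HasDerivAt f d t) (hg : ∀ᶠ u in 𝓝 t, ‖g u - g t‖ ≤ ‖f u - f t‖) :
    ‖deriv g t‖ ≤ ‖d‖ := by
  by_cases hgt : DifferentiableAt ℝ g t
  · have hslope : ∀ᶠ u in 𝓝[≠] t, ‖slope g t u‖ ≤ ‖slope f t u‖ := by
      filter_upwards [nhdsWithin_le_nhds hg] with u hu
      simp only [slope_def_module, norm_smul]
      gcongr
    exact le_of_tendsto_of_tendsto
      (hasDerivAt_iff_tendsto_slope.mp hgt.hasDerivAt).norm
      (hasDerivAt_iff_tendsto_slope.mp hf).norm hslope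
  · simp [deriv_zero_of_not_differentiableAt hgt]

theorem AbsolutelyContinuousOnInterval.abs_sub_le_of_ae_abs_deriv_le {f : ℝ → ℝ} {a b C : ℝ}
    (hf : AbsolutelyContinuousOnInterval f a b) (hd : ∀ᵐ t, t ∈ uIoc a b → |deriv f t| ≤ C) :
    |f b - f a| ≤ C * |b - a| := by
  rw [← hf.integral_deriv_eq_sub, ← Real.norm_eq_abs]
  exact intervalIntegral.norm_integral_le_of_norm_le_const_ae (by simpa only [Real.norm_eq_abs] using hd)

theorem LipschitzOnWith.of_ae_abs_deriv_le {f : ℝ → ℝ} {a b : ℝ} {K C : ℝ≥0}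
    (hf : LipschitzOnWith K f (Icc a b))
    (hd : ∀ᵐ t ∂volume.restrict (Icc a b), |deriv f t| ≤ C) :
    LipschitzOnWith C f (Icc a b) := by
  refine LipschitzOnWith.of_dist_le_mul fun x hx y hy => ?_
  have hsub : uIcc y x ⊆ Icc a b := uIcc_subset_Icc hy hx
  rw [Real.dist_eq, Real.dist_eq]
  refine AbsolutelyContinuousOnInterval.abs_sub_le_of_ae_abs_deriv_le
    (hf.mono hsub).absolutelyContinuousOnInterval ?_
  rw [ae_restrict_iff' measurableSet_Icc] at hd
  filter_upwards [hd] with t ht htI using ht (hsub (uIoc_subset_uIcc htI))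

theorem LipschitzOnWith.inv_of_le {α : Type*} [PseudoMetricSpace α] {f : α → ℝ} {s : Set α}
    {K : ℝ≥0} {ε : ℝ} (hf : LipschitzOnWith K f s) (hε : 0 < ε) (hfε : ∀ x ∈ s, ε ≤ f x) :
    LipschitzOnWith (K / (ε ^ 2).toNNReal) f⁻¹ s := by
  refine LipschitzOnWith.of_dist_le_mul fun x hx y hy => ?_
  have hx' := hε.trans_le (hfε x hx)
  have hy' := hε.trans_le (hfε y hy)
  have hεε : ε ^ 2 ≤ f x * f y := by
    rw [sq]; exact mul_le_mul (hfε x hx) (hfε y hy) hε.le hx'.le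
  rw [NNReal.coe_div, Real.coe_toNNReal _ (by positivity), Pi.inv_apply, Pi.inv_apply,
    Real.dist_eq, inv_sub_inv hx'.ne' hy'.ne', abs_div,
    abs_of_pos (mul_pos hx' hy'), ← Real.dist_eq, dist_comm (f y), div_mul_eq_mul_div]
  exact div_le_div₀ (by positivity) (hf.dist_le_mul x hx y hy) (by positivity) hεε

section ReciprocalOfMax

variable {s : ℝ → ℝ} {a b : ℝ} {K C : ℝ≥0}

theorem abs_deriv_inv_max_le {t d ε : ℝ} (hε : 0 < ε) (hs : HasDerivAt s d t) (hst : 0 ≤ s t)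
    (hd : |d| ≤ C * s t ^ 2) : |deriv (fun u => (max (s u) ε)⁻¹) t| ≤ C := by
  set m := fun u => max (s u) ε
  show |deriv m⁻¹ t| ≤ C
  have hm : 0 < m t := hε.trans_le (le_max_right _ _)
  have hdm : |deriv m t| ≤ |d| := by
    simpa only [Real.norm_eq_abs] using norm_deriv_le_of_norm_sub_le (g := m) hs
      (Eventually.of_forall fun u => by
        simpa only [Real.norm_eq_abs] using abs_max_sub_max_le_abs (s u) (s t) ε)
  by_cases hmt : DifferentiableAt ℝ m t
  · rw [deriv_inv'' hmt hm.ne', abs_div, abs_neg, abs_of_pos (pow_pos hm 2),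
      div_le_iff₀ (by positivity)]
    calc |deriv m t| ≤ |d| := hdm
      _ ≤ C * s t ^ 2 := hd
      _ ≤ C * m t ^ 2 := by gcongr; exact le_max_left _ _
  · have hinv : ¬DifferentiableAt ℝ m⁻¹ t := fun h =>
      hmt (by simpa only [inv_inv] using h.inv (inv_ne_zero hm.ne'))
    rw [deriv_zero_of_not_differentiableAt hinv, abs_zero]
    exact C.coe_nonneg

variable (hlip : LipschitzOnWith K s (Icc a b)) (hnonneg : ∀ t ∈ Icc a b, 0 ≤ s t)
  (hder : ∀ᵐ t ∂(volume.restrict (Icc a b)), ∃ d, HasDerivAt s d t ∧ |d| ≤ C * s t ^ 2)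
include hlip hnonneg hder

theorem lipschitzOnWith_inv_max {ε : ℝ} (hε : 0 < ε) :
    LipschitzOnWith C (fun t => (max (s t) ε)⁻¹) (Icc a b) := by
  have hmax : LipschitzOnWith (1 * K) (fun t => max (s t) ε) (Icc a b) :=
    (LipschitzWith.id.max_const ε).comp_lipschitzOnWith hlip
  refine (hmax.inv_of_le hε fun t _ => le_max_right _ _).of_ae_abs_deriv_le ?_
  filter_upwards [hder, ae_restrict_mem measurableSet_Icc] with t ⟨d, hd, hdC⟩ ht
  exact abs_deriv_inv_max_le hε hd (hnonneg t ht) hdC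

theorem exists_pos_le_of_pos {t₀ : ℝ} (ht₀ : t₀ ∈ Icc a b) (hs₀ : 0 < s t₀) :
    ∃ m > 0, ∀ t ∈ Icc a b, m ≤ s t := by
  set R := (s t₀)⁻¹ + C * (b - a)
  have hR : 0 < R :=
    add_pos_of_pos_of_nonneg (inv_pos.2 hs₀) (mul_nonneg C.coe_nonneg (by linarith [ht₀.1, ht₀.2]))
  have hε : 0 < (2 * R)⁻¹ := by positivity
  refine ⟨R⁻¹, inv_pos.2 hR, fun t ht => ?_⟩
  have hdist := (lipschitzOnWith_inv_max hlip hnonneg hder hε).dist_le_mul t ht t₀ ht₀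
  rw [Real.dist_eq, abs_sub_le_iff] at hdist
  have hmax : R⁻¹ ≤ max (s t) (2 * R)⁻¹ := by
    rw [inv_le_comm₀ hR (hε.trans_le (le_max_right _ _))]
    calc (max (s t) (2 * R)⁻¹)⁻¹ ≤ (max (s t₀) (2 * R)⁻¹)⁻¹ + C * dist t t₀ := by linarith
      _ ≤ R := add_le_add (inv_anti₀ hs₀ (le_max_left _ _))
        (mul_le_mul_of_nonneg_left (Real.dist_le_of_mem_Icc ht ht₀) C.coe_nonneg)
  have hεR : (2 * R)⁻¹ < R⁻¹ := by gcongr; linarith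
  exact (le_max_iff.mp hmax).resolve_right hεR.not_ge

end ReciprocalOfMax

theorem zero_or_reciprocal_lipschitz_general {a b C : ℝ}
    (s : ℝ → ℝ) {K : NNReal}
    (hlip : LipschitzOnWith K s (Set.Icc a b))
    (hnonneg : ∀ t ∈ Set.Icc a b, 0 ≤ s t)
    (hder : ∀ᵐ t ∂(volume.restrict (Set.Icc a b)),
      ∃ d : ℝ, HasDerivAt s d t ∧ |d| ≤ C * (s t) ^ 2) :
    (∀ t ∈ Set.Icc a b, s t = 0) ∨
      ((∀ t ∈ Set.Icc a b, 0 < s t) ∧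
        LipschitzOnWith C.toNNReal (fun t => 1 / s t) (Set.Icc a b)) := by
  by_cases hzero : ∀ t ∈ Icc a b, s t = 0
  · exact Or.inl hzero
  push Not at hzero
  obtain ⟨t₀, ht₀, hs₀⟩ := hzero
  have hder' : ∀ᵐ t ∂(volume.restrict (Icc a b)),
      ∃ d, HasDerivAt s d t ∧ |d| ≤ C.toNNReal * s t ^ 2 := by
    filter_upwards [hder] with t ⟨d, hd, hdC⟩
    exact ⟨d, hd, hdC.trans (by gcongr; exact Real.le_coe_toNNReal C)⟩
  obtain ⟨m, hm, hms⟩ :=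
    exists_pos_le_of_pos hlip hnonneg hder' ht₀ ((hnonneg t₀ ht₀).lt_of_ne' hs₀)
  refine Or.inr ⟨fun t ht => hm.trans_le (hms t ht), fun x hx y hy => ?_⟩
  have hmax : ∀ t ∈ Icc a b, max (s t) (m / 2) = s t := fun t ht =>
    max_eq_left ((half_le_self hm.le).trans (hms t ht))
  simpa only [hmax x hx, hmax y hy, one_div] using
    lipschitzOnWith_inv_max hlip hnonneg hder' (half_pos hm) hx hy

/-- If `s : [a,b] → [0,∞)` is Lipschitz with `|s'| ≤ C s²` a.e., then either `s ≡ 0`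
or `s > 0` everywhere and `1/s` is `C`-Lipschitz on `[a,b]`. -/
theorem zero_or_reciprocal_lipschitz {a b C : ℝ} (hC : 0 < C)
    (s : ℝ → ℝ) {K : NNReal}
    (hlip : LipschitzOnWith K s (Set.Icc a b))
    (hnonneg : ∀ t ∈ Set.Icc a b, 0 ≤ s t)
    (hder : ∀ᵐ t ∂(volume.restrict (Set.Icc a b)),
      ∃ d : ℝ, HasDerivAt s d t ∧ |d| ≤ C * (s t) ^ 2) :
    (∀ t ∈ Set.Icc a b, s t = 0) ∨
      ((∀ t ∈ Set.Icc a b, 0 < s t) ∧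
        LipschitzOnWith C.toNNReal (fun t => 1 / s t) (Set.Icc a b)) :=
  zero_or_reciprocal_lipschitz_general s hlip hnonneg hder
end

section
/- Let v : [0,h] → ℝ^n be C¹ with v(0) = v(h) = 0, and suppose ∫₀^h ‖v'(t)‖² dt ≤ C₂·∫₀^h (‖v(t)‖ + t·‖v'(t)‖) dt for some constant C₂ > 0. Then ∫₀^h ‖v'(t)‖² dt ≤ (4/3)·C₂²·h³, and consequently max_{t∈[0,h]} ‖v(t)‖ ≤ 2·C₂·h². -/
open MeasureTheory intervalIntegral
open Set

/-!
Put `I = ∫₀ʰ ‖v'‖²` and `J = ∫₀ʰ t ‖v'(t)‖ dt`. As `v h = 0`, `‖v t‖ ≤ ∫ₜʰ ‖v'‖`, and integrating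
this in `t` (the double integral is `J`) gives `∫₀ʰ ‖v‖ ≤ J`, so the hypothesis becomes
`I ≤ 2 C₂ J`. Cauchy–Schwarz gives `J² ≤ (h³/3) I`, hence `I ≤ (4/3) C₂² h³`, and also
`‖v t‖² ≤ h I ≤ (2 C₂ h²)²`.
-/

theorem sq_integral_mul_le_integral_sq_mul_integral_sq {α : Type*} [MeasurableSpace α]
    {μ : Measure α} {f g : α → ℝ} (hf : Integrable (fun x ↦ f x ^ 2) μ)
    (hg : Integrable (fun x ↦ g x ^ 2) μ) (hfg : Integrable (fun x ↦ f x * g x) μ) :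
    (∫ x, f x * g x ∂μ) ^ 2 ≤ (∫ x, f x ^ 2 ∂μ) * ∫ x, g x ^ 2 ∂μ := by
  set A := ∫ x, f x ^ 2 ∂μ
  set B := ∫ x, f x * g x ∂μ
  set C := ∫ x, g x ^ 2 ∂μ
  -- the quadratic `r ↦ ∫ (f + r g)²` is nonnegative, so its discriminant is not positive
  have hquad : ∀ r : ℝ, 0 ≤ C * (r * r) + 2 * B * r + A := fun r ↦ by
    have hexp : ∫ x, (f x + r * g x) ^ 2 ∂μ = C * (r * r) + 2 * B * r + A := by
      simp_rw [show ∀ x, (f x + r * g x) ^ 2 = r * r * g x ^ 2 + 2 * r * (f x * g x) + f x ^ 2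
        from fun x ↦ by ring]
      rw [MeasureTheory.integral_add, MeasureTheory.integral_add, MeasureTheory.integral_const_mul,
        MeasureTheory.integral_const_mul]
      · ring
      · exact hg.const_mul _
      · exact hfg.const_mul _
      · exact (hg.const_mul _).add (hfg.const_mul _)
      · exact hf
    exact hexp ▸ integral_nonneg fun x ↦ sq_nonneg _
  have := discrim_le_zero hquad
  rw [discrim] at this
  nlinarith

theorem sq_intervalIntegral_mul_le {f g : ℝ → ℝ} {a b : ℝ} (hab : a ≤ b)
    (hf : ContinuousOn f (Icc a b)) (hg : ContinuousOn g (Icc a b)) :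
    (∫ t in a..b, f t * g t) ^ 2 ≤ (∫ t in a..b, f t ^ 2) * ∫ t in a..b, g t ^ 2 := by
  rw [← uIcc_of_le hab] at hf hg
  simp only [integral_of_le hab]
  exact sq_integral_mul_le_integral_sq_mul_integral_sq
    ((hf.pow 2).intervalIntegrable.1) ((hg.pow 2).intervalIntegrable.1)
    ((hf.mul hg).intervalIntegrable.1)

theorem ContinuousOn.exists_continuous_eqOn_Icc {β : Type*} [TopologicalSpace β] {f : ℝ → β}
    {a b : ℝ} (hab : a ≤ b) (hf : ContinuousOn f (Icc a b)) :
    ∃ g : ℝ → β, Continuous g ∧ EqOn g f (Icc a b) :=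
  ⟨IccExtend hab ((Icc a b).domRestrict f), continuous_IccExtend_iff.mpr hf.domRestrict,
    fun _ ht ↦ IccExtend_of_mem hab _ ht⟩

theorem integral_integral_eq_integral_sub_mul_of_continuous {w : ℝ → ℝ} (hw : Continuous w)
    (a b : ℝ) : ∫ t in a..b, ∫ s in t..b, w s = ∫ t in a..b, (t - a) * w t := by
  have hparts := integral_mul_deriv_eq_deriv_mul (a := a) (b := b)
    (u := fun t ↦ t - a) (u' := fun _ ↦ 1) (v := fun t ↦ ∫ s in t..b, w s) (v' := fun t ↦ -w t)
    (fun t _ ↦ (hasDerivAt_id t).sub_const a)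
    (fun t _ ↦ integral_hasDerivAt_left (hw.intervalIntegrable t b)
      hw.stronglyMeasurable.stronglyMeasurableAtFilter hw.continuousAt)
    intervalIntegrable_const (hw.neg.intervalIntegrable a b)
  simp only [mul_neg, intervalIntegral.integral_neg, integral_same, mul_zero, sub_self, zero_mul,
    one_mul, zero_sub, neg_inj] at hparts
  exact hparts.symm

theorem integral_integral_eq_integral_sub_mul {w : ℝ → ℝ} {a b : ℝ} (hab : a ≤ b)
    (hw : ContinuousOn w (Icc a b)) :
    ∫ t in a..b, ∫ s in t..b, w s = ∫ t in a..b, (t - a) * w t := by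
  obtain ⟨g, hg, hgw⟩ := hw.exists_continuous_eqOn_Icc hab
  have hsub : ∀ t ∈ uIcc a b, uIcc t b ⊆ Icc a b := fun t ht ↦ by
    rw [uIcc_of_le hab] at ht
    rw [uIcc_of_le ht.2]
    exact Icc_subset_Icc_left ht.1
  calc ∫ t in a..b, ∫ s in t..b, w s = ∫ t in a..b, ∫ s in t..b, g s :=
        integral_congr fun t ht ↦ integral_congr fun s hs ↦ (hgw (hsub t ht hs)).symm
    _ = ∫ t in a..b, (t - a) * g t := integral_integral_eq_integral_sub_mul_of_continuous hg a b
    _ = ∫ t in a..b, (t - a) * w t := integral_congr fun t ht ↦ by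
        rw [hgw (by rwa [uIcc_of_le hab] at ht)]

theorem norm_sub_le_integral_norm_deriv {E : Type*} [NormedAddCommGroup E] [NormedSpace ℝ E]
    [CompleteSpace E] {f f' : ℝ → E} {a b : ℝ} (hab : a ≤ b)
    (hf : ∀ t ∈ Icc a b, HasDerivAt f (f' t) t) (hf' : IntervalIntegrable f' volume a b) :
    ‖f b - f a‖ ≤ ∫ t in a..b, ‖f' t‖ := by
  rw [← integral_eq_sub_of_hasDerivAt (by rwa [uIcc_of_le hab]) hf']
  exact norm_integral_le_integral_norm hab

section VanishingAtRightEndpoint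

variable {E : Type*} [NormedAddCommGroup E] [NormedSpace ℝ E] [CompleteSpace E]
  {f f' : ℝ → E} {a b : ℝ}

theorem norm_le_integral_norm_deriv_of_right_eq_zero
    (hf : ∀ t ∈ Icc a b, HasDerivAt f (f' t) t) (hf' : ContinuousOn f' (Icc a b))
    (hfb : f b = 0) {t : ℝ} (ht : t ∈ Icc a b) : ‖f t‖ ≤ ∫ s in t..b, ‖f' s‖ := by
  have hsub : Icc t b ⊆ Icc a b := Icc_subset_Icc_left ht.1
  have := norm_sub_le_integral_norm_deriv ht.2 (fun s hs ↦ hf s (hsub hs))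
    ((hf'.mono (uIcc_of_le ht.2 ▸ hsub)).intervalIntegrable)
  rwa [hfb, zero_sub, norm_neg] at this

theorem integral_norm_le_integral_sub_mul_norm_deriv (hab : a ≤ b)
    (hf : ∀ t ∈ Icc a b, HasDerivAt f (f' t) t) (hf' : ContinuousOn f' (Icc a b))
    (hfb : f b = 0) : ∫ t in a..b, ‖f t‖ ≤ ∫ t in a..b, (t - a) * ‖f' t‖ := by
  have hcont : ContinuousOn f (uIcc a b) :=
    uIcc_of_le hab ▸ fun t ht ↦ (hf t ht).continuousAt.continuousWithinAt
  have htail : ContinuousOn (fun t ↦ ∫ s in t..b, ‖f' s‖) (uIcc a b) :=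
    continuousOn_primitive_interval_left
      (uIcc_of_le hab ▸ hf'.norm.integrableOn_compact isCompact_Icc)
  calc ∫ t in a..b, ‖f t‖ ≤ ∫ t in a..b, ∫ s in t..b, ‖f' s‖ :=
        integral_mono_on hab hcont.norm.intervalIntegrable htail.intervalIntegrable
          fun t ht ↦ norm_le_integral_norm_deriv_of_right_eq_zero hf hf' hfb ht
    _ = ∫ t in a..b, (t - a) * ‖f' t‖ := integral_integral_eq_integral_sub_mul hab hf'.norm

theorem sq_norm_le_mul_integral_sq_norm_deriv_of_right_eq_zero (hab : a ≤ b)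
    (hf : ∀ t ∈ Icc a b, HasDerivAt f (f' t) t) (hf' : ContinuousOn f' (Icc a b))
    (hfb : f b = 0) {t : ℝ} (ht : t ∈ Icc a b) :
    ‖f t‖ ^ 2 ≤ (b - a) * ∫ s in a..b, ‖f' s‖ ^ 2 := by
  have htail : ∫ s in t..b, ‖f' s‖ ≤ ∫ s in a..b, 1 * ‖f' s‖ := by
    simp only [one_mul]
    exact integral_mono_interval ht.1 ht.2 le_rfl (ae_of_all _ fun s ↦ norm_nonneg _)
      (hf'.norm.intervalIntegrable_of_Icc hab)
  calc ‖f t‖ ^ 2 ≤ (∫ s in a..b, 1 * ‖f' s‖) ^ 2 := pow_le_pow_left₀ (norm_nonneg _)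
        ((norm_le_integral_norm_deriv_of_right_eq_zero hf hf' hfb ht).trans htail) 2
    _ ≤ (∫ s in a..b, (1 : ℝ) ^ 2) * ∫ s in a..b, ‖f' s‖ ^ 2 :=
        sq_intervalIntegral_mul_le hab continuousOn_const hf'.norm
    _ = (b - a) * ∫ s in a..b, ‖f' s‖ ^ 2 := by simp

end VanishingAtRightEndpoint

theorem integral_bootstrap_general {n : ℕ} {h C₂ : ℝ} (hh : 0 < h) (hC₂ : 0 < C₂)
    (v v' : ℝ → EuclideanSpace ℝ (Fin n))
    (hder : ∀ t ∈ Set.Icc 0 h, HasDerivAt v (v' t) t)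
    (hcont : ContinuousOn v' (Set.Icc 0 h))
    (hvh : v h = 0)
    (hineq : ∫ t in (0:ℝ)..h, ‖v' t‖ ^ 2 ≤
      C₂ * ∫ t in (0:ℝ)..h, (‖v t‖ + t * ‖v' t‖)) :
    (∫ t in (0:ℝ)..h, ‖v' t‖ ^ 2 ≤ (4 / 3) * C₂ ^ 2 * h ^ 3) ∧
      ∀ t ∈ Set.Icc 0 h, ‖v t‖ ≤ 2 * C₂ * h ^ 2 := by
  set I := ∫ t in (0:ℝ)..h, ‖v' t‖ ^ 2
  set J := ∫ t in (0:ℝ)..h, t * ‖v' t‖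
  have hI_nonneg : 0 ≤ I := integral_nonneg hh.le fun t _ ↦ sq_nonneg _
  have hv_int : ∫ t in (0:ℝ)..h, ‖v t‖ ≤ J := by
    simpa using integral_norm_le_integral_sub_mul_norm_deriv hh.le hder hcont hvh
  have hv_cont : ContinuousOn v (Icc 0 h) := fun t ht ↦ (hder t ht).continuousAt.continuousWithinAt
  have hIJ : I ≤ 2 * C₂ * J := by
    rw [intervalIntegral.integral_add (g := fun t ↦ t * ‖v' t‖)
      (hv_cont.norm.intervalIntegrable_of_Icc hh.le)
      ((continuousOn_id.mul hcont.norm).intervalIntegrable_of_Icc hh.le)] at hineq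
    calc I ≤ C₂ * ((∫ t in (0:ℝ)..h, ‖v t‖) + J) := hineq
      _ ≤ C₂ * (J + J) := by gcongr
      _ = 2 * C₂ * J := by ring
  have hJI : J ^ 2 ≤ h ^ 3 / 3 * I := by
    have := sq_intervalIntegral_mul_le hh.le continuousOn_id hcont.norm
    norm_num [integral_pow] at this
    exact this
  have hI : I ≤ 4 / 3 * C₂ ^ 2 * h ^ 3 := by
    rcases hI_nonneg.eq_or_lt with hI0 | hI_pos
    · rw [← hI0]; positivity
    refine le_of_mul_le_mul_right ?_ hI_pos
    calc I * I ≤ 4 * C₂ ^ 2 * J ^ 2 := (mul_self_le_mul_self hI_nonneg hIJ).trans_eq (by ring)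
      _ ≤ 4 * C₂ ^ 2 * (h ^ 3 / 3 * I) := by gcongr
      _ = 4 / 3 * C₂ ^ 2 * h ^ 3 * I := by ring
  refine ⟨hI, fun t ht ↦ (pow_le_pow_iff_left₀ (norm_nonneg _) (by positivity) two_ne_zero).mp ?_⟩
  calc ‖v t‖ ^ 2 ≤ (h - 0) * I :=
        sq_norm_le_mul_integral_sq_norm_deriv_of_right_eq_zero hh.le hder hcont hvh ht
    _ ≤ h * (4 / 3 * C₂ ^ 2 * h ^ 3) := by rw [sub_zero]; gcongr
    _ ≤ (2 * C₂ * h ^ 2) ^ 2 := by nlinarith [pow_pos hh 4, sq_nonneg C₂]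

/-- If `v : [0,h] → ℝ^n` is `C¹` with `v(0) = v(h) = 0` and
`∫‖v'‖² ≤ C₂ ∫(‖v‖ + t‖v'‖)`, then `∫‖v'‖² ≤ (4/3)C₂²h³` and `‖v(t)‖ ≤ 2C₂h²`. -/
theorem integral_bootstrap {n : ℕ} {h C₂ : ℝ} (hh : 0 < h) (hC₂ : 0 < C₂)
    (v v' : ℝ → EuclideanSpace ℝ (Fin n))
    (hder : ∀ t ∈ Set.Icc 0 h, HasDerivAt v (v' t) t)
    (hcont : ContinuousOn v' (Set.Icc 0 h))
    (hv0 : v 0 = 0) (hvh : v h = 0)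
    (hineq : ∫ t in (0:ℝ)..h, ‖v' t‖ ^ 2 ≤
      C₂ * ∫ t in (0:ℝ)..h, (‖v t‖ + t * ‖v' t‖)) :
    (∫ t in (0:ℝ)..h, ‖v' t‖ ^ 2 ≤ (4 / 3) * C₂ ^ 2 * h ^ 3) ∧
      ∀ t ∈ Set.Icc 0 h, ‖v t‖ ≤ 2 * C₂ * h ^ 2 :=
  integral_bootstrap_general hh hC₂ v v' hder hcont hvh hineq
end

section
/- Stability under perturbation of lightcones: let g be an L-Lipschitz Lorentzian metric on a chart U ⊆ ℝ^n with g₀ = standard Minkowski product at 0 ∈ U, and for h > 0 define g^h(v,w) = ⟨v,w⟩ + 4·L·h·v_t·w_t. Then for all x ∈ U with ‖x‖ ≤ h and all Euclidean unit vectors v: (1) |g_x(v,v) − g^h(v,v)| ≤ 5·L·h, and (2) if g_x(v,v) > 0 then g^h(v,v) > 0. -/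
/-! On a Euclidean unit vector the Minkowski form is `2 v_t² - 1`, so it is determined by
`τ = v_t² ∈ [0, 1]`. If `|g_x(v,v) - ⟨v,v⟩| ≤ s` with `s = L h`, the bound (1) is the triangle
inequality, and (2) follows from `g^h(v,v) = ⟨v,v⟩ (1 + 2s) + 2s > -s (1 + 2s) + 2s = s (1 - 2s)`. -/

theorem mink_self_eq {n : ℕ} (v : EuclideanSpace ℝ (Fin (n + 1))) :
    mink v v = 2 * v 0 ^ 2 - ‖v‖ ^ 2 := by
  rw [mink, EuclideanSpace.real_norm_sq_eq, Fin.sum_univ_succ]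
  simp only [sq]
  ring

theorem sq_apply_le_one_of_norm_eq_one {ι : Type*} [Fintype ι] {v : EuclideanSpace ℝ ι}
    (hv : ‖v‖ = 1) (i : ι) : v i ^ 2 ≤ 1 := by
  rw [sq_le_one_iff_abs_le_one, ← Real.norm_eq_abs, ← hv]
  exact PiLp.norm_apply_le v i

section Perturbation

variable {a m s τ : ℝ}

theorem abs_sub_add_le_of_abs_sub_le (hs : 0 ≤ s) (hτ₀ : 0 ≤ τ) (hτ₁ : τ ≤ 1)
    (ha : |a - m| ≤ s) : |a - (m + 4 * s * τ)| ≤ 5 * s :=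
  calc |a - (m + 4 * s * τ)| ≤ |a - m| + |4 * s * τ| := by
        rw [sub_add_eq_sub_sub]; exact abs_sub _ _
    _ ≤ s + 4 * s := by
        gcongr
        rw [abs_of_nonneg (by positivity)]
        exact mul_le_of_le_one_right (by positivity) hτ₁
    _ = 5 * s := by ring

theorem add_pos_of_abs_sub_le (hs₀ : 0 ≤ s) (hs : s < 1 / 2) (hm : m = 2 * τ - 1)
    (ha : |a - m| ≤ s) (hpos : 0 < a) : 0 < m + 4 * s * τ := by
  have hm_gt : -s < m := by linarith [le_abs_self (a - m)]
  calc 0 ≤ s * (1 - 2 * s) := mul_nonneg hs₀ (by linarith)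
    _ = -s * (1 + 2 * s) + 2 * s := by ring
    _ < m * (1 + 2 * s) + 2 * s := by gcongr
    _ = m + 4 * s * τ := by rw [hm]; ring

end Perturbation

theorem lightcone_perturbation_general {n : ℕ} {U : Set (EuclideanSpace ℝ (Fin (n + 1)))}
    (h0U : (0 : EuclideanSpace ℝ (Fin (n + 1))) ∈ U)
    {L h : ℝ} (hL : 0 < L) (hLh : L * h < 1 / 2)
    (g : EuclideanSpace ℝ (Fin (n + 1)) →
      (EuclideanSpace ℝ (Fin (n + 1)) →L[ℝ] EuclideanSpace ℝ (Fin (n + 1)) →L[ℝ] ℝ))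
    (hlip : ∀ x ∈ U, ∀ y ∈ U, ∀ v w : EuclideanSpace ℝ (Fin (n + 1)),
      ‖v‖ = 1 → ‖w‖ = 1 → |g x v w - g y v w| ≤ L * ‖x - y‖)
    (hg0 : ∀ v w : EuclideanSpace ℝ (Fin (n + 1)), g 0 v w = mink v w) :
    ∀ x ∈ U, ‖x‖ ≤ h → ∀ v : EuclideanSpace ℝ (Fin (n + 1)), ‖v‖ = 1 →
      (|g x v v - (mink v v + 4 * L * h * (v 0) ^ 2)| ≤ 5 * L * h) ∧
        (0 < g x v v → 0 < mink v v + 4 * L * h * (v 0) ^ 2) := by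
  intro x hx hxh v hv
  have hs : 0 ≤ L * h := mul_nonneg hL.le ((norm_nonneg x).trans hxh)
  have hdev : |g x v v - mink v v| ≤ L * h := by
    have := hlip x hx 0 h0U v v hv hv
    rw [hg0, sub_zero] at this
    exact this.trans (mul_le_mul_of_nonneg_left hxh hL.le)
  have hmink : mink v v = 2 * v 0 ^ 2 - 1 := by rw [mink_self_eq, hv, one_pow]
  rw [mul_assoc 4 L h, mul_assoc 5 L h]
  exact ⟨abs_sub_add_le_of_abs_sub_le hs (sq_nonneg _) (sq_apply_le_one_of_norm_eq_one hv 0) hdev,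
    add_pos_of_abs_sub_le hs hLh hmink hdev⟩

/-- Stability under perturbation of lightcones: for an `L`-Lipschitz Lorentzian metric
`g` with `g₀` the Minkowski product and `g^h(v,w) = ⟨v,w⟩ + 4Lh v_t w_t`, for all
`‖x‖ ≤ h` and unit vectors `v`: (1) `|g_x(v,v) − g^h(v,v)| ≤ 5Lh`; (2) if
`g_x(v,v) > 0` then `g^h(v,v) > 0`. -/
theorem lightcone_perturbation {n : ℕ} {U : Set (EuclideanSpace ℝ (Fin (n + 1)))}
    (hU : IsOpen U) (h0U : (0 : EuclideanSpace ℝ (Fin (n + 1))) ∈ U)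
    {L h : ℝ} (hL : 0 < L) (hh : 0 < h) (hLh : L * h < 1 / 2)
    (g : EuclideanSpace ℝ (Fin (n + 1)) →
      (EuclideanSpace ℝ (Fin (n + 1)) →L[ℝ] EuclideanSpace ℝ (Fin (n + 1)) →L[ℝ] ℝ))
    (hlip : ∀ x ∈ U, ∀ y ∈ U, ∀ v w : EuclideanSpace ℝ (Fin (n + 1)),
      ‖v‖ = 1 → ‖w‖ = 1 → |g x v w - g y v w| ≤ L * ‖x - y‖)
    (hg0 : ∀ v w : EuclideanSpace ℝ (Fin (n + 1)), g 0 v w = mink v w) :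
    ∀ x ∈ U, ‖x‖ ≤ h → ∀ v : EuclideanSpace ℝ (Fin (n + 1)), ‖v‖ = 1 →
      (|g x v v - (mink v v + 4 * L * h * (v 0) ^ 2)| ≤ 5 * L * h) ∧
        (0 < g x v v → 0 < mink v v + 4 * L * h * (v 0) ^ 2) :=
  lightcone_perturbation_general h0U hL hLh g hlip hg0
end
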